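/- Two permutations σ_1, σ_2 ∈ S_n satisfy φ(σ_1) = φ(σ_2) if and only if σ_1 and σ_2 are sylvester congruent. -/

import Mathlib

open scoped Classical

/-- `d` is a diagonal of the convex `(n+2)`-gon with vertices `0,…,n+1`
(in clockwise increasing order): it joins two nonadjacent vertices. -/
def IsDiagonal (n : ℕ) (d : ℕ × ℕ) : Prop :=
  d.1 < d.2 ∧ d.2 ≤ n + 1 ∧ d.2 ≠ d.1 + 1 ∧ ¬(d.1 = 0 ∧ d.2 = n + 1)

/-- Two diagonals of a convex polygon cross. -/
def Crosses (d e : ℕ × ℕ) : Prop :=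
  (d.1 < e.1 ∧ e.1 < d.2 ∧ d.2 < e.2) ∨ (e.1 < d.1 ∧ d.1 < e.2 ∧ e.2 < d.2)

/-- A triangulation of the convex `(n+2)`-gon: `n-1` pairwise noncrossing diagonals. -/
def IsTriangulation (n : ℕ) (D : Finset (ℕ × ℕ)) : Prop :=
  (∀ d ∈ D, IsDiagonal n d) ∧ (∀ d ∈ D, ∀ e ∈ D, ¬ Crosses d e) ∧ D.card = n - 1

/-- `{a,b}` (with `a<b`) is an edge of the triangulation `D`: a polygon side or a diagonal. -/
def IsEdge (n : ℕ) (D : Finset (ℕ × ℕ)) (a b : ℕ) : Prop :=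
  a < b ∧ b ≤ n + 1 ∧ (b = a + 1 ∨ (a = 0 ∧ b = n + 1) ∨ (a, b) ∈ D)

/-- `{a,b,c}` (with `a<b<c`) is a (triangular) face of the triangulation `D`. -/
def IsFace (n : ℕ) (D : Finset (ℕ × ℕ)) (a b c : ℕ) : Prop :=
  a < b ∧ b < c ∧ IsEdge n D a b ∧ IsEdge n D b c ∧ IsEdge n D a c

/-- An ear of a triangulation: a vertex incident to no diagonal. -/
def IsEar (n : ℕ) (D : Finset (ℕ × ℕ)) (v : ℕ) : Prop :=
  v ≤ n + 1 ∧ ∀ d ∈ D, d.1 ≠ v ∧ d.2 ≠ v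

/-- Degree of a vertex: number of edges (polygon sides and diagonals) incident to it. -/
noncomputable def degreeOf (n : ℕ) (D : Finset (ℕ × ℕ)) (v : ℕ) : ℕ :=
  ((Finset.range (n + 2)).filter (fun w => w ≠ v ∧ IsEdge n D (min v w) (max v w))).card

/-- The set of faces of a triangulation, as increasing triples. -/
noncomputable def facesSet (n : ℕ) (D : Finset (ℕ × ℕ)) : Finset (ℕ × ℕ × ℕ) :=
  (Finset.range (n + 2) ×ˢ Finset.range (n + 2) ×ˢ Finset.range (n + 2)).filter
    (fun t => IsFace n D t.1 t.2.1 t.2.2)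

/-- Predecessor of `v` in the vertex set `Y`. -/
def predIn (Y : Finset ℕ) (v : ℕ) : ℕ := (Y.filter (· < v)).max.unbotD 0
/-- Successor of `v` in the vertex set `Y`. -/
def succIn (Y : Finset ℕ) (v : ℕ) : ℕ := (Y.filter (v < ·)).min.untopD 0

/-- The iterative neighbor-joining construction: for each successive letter,
join its two current neighbors by a diagonal and delete the letter's vertex. -/
def phiAux : List ℕ → Finset ℕ → Finset (ℕ × ℕ)
  | [], _ => ∅
  | [_], _ => ∅
  | v :: rest, Y => insert (predIn Y v, succIn Y v) (phiAux rest (Y.erase v))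

/-- The map `φ` from permutations (standard words, letters `1,…,n`) to
triangulations of the `(n+2)`-gon with vertices `0,…,n+1`. -/
def phiT (n : ℕ) (l : List ℕ) : Finset (ℕ × ℕ) := phiAux l (Finset.range (n + 2))

/-- `t` is the third vertex of a face of `D` containing the polygon side `{i, i+1}`. -/
def FaceOnEdge (n : ℕ) (D : Finset (ℕ × ℕ)) (i t : ℕ) : Prop :=
  (t < i ∧ IsFace n D t i (i + 1)) ∨ (i + 1 < t ∧ IsFace n D i (i + 1) t)

/-- `D` and `D'` differ by one diagonal flip, in the quadrilateral `a<b<c<d`. -/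
def FlipAdj (n : ℕ) (D D' : Finset (ℕ × ℕ)) : Prop :=
  ∃ a b c d : ℕ, a < b ∧ b < c ∧ c < d ∧
    ((IsFace n D a b d ∧ IsFace n D b c d ∧ D' = insert (a, c) (D.erase (b, d))) ∨
     (IsFace n D a b c ∧ IsFace n D a c d ∧ D' = insert (b, d) (D.erase (a, c))))

/-- Sylvester adjacency: `u x z u' y u'' ~ u z x u' y u''` with `x ≤ y < z`. -/
def SylvAdj (w1 w2 : List ℕ) : Prop :=
  ∃ (u u' u'' : List ℕ) (x y z : ℕ), x ≤ y ∧ y < z ∧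
    w1 = u ++ x :: z :: (u' ++ y :: u'') ∧ w2 = u ++ z :: x :: (u' ++ y :: u'')

/-- Sylvester congruence: the equivalence relation generated by sylvester adjacency. -/
def SylvCong : List ℕ → List ℕ → Prop := Relation.EqvGen SylvAdj

/-- Standardization of a word: replace the occurrences of the smallest letter,
left to right, by `1, 2, …`, then continue with the next letter, etc. -/
def stdW (w : List ℕ) : List ℕ :=
  (List.range w.length).map (fun i =>
    (((List.range w.length).filter (fun j =>
      w.getD j 0 < w.getD i 0 ∨ (w.getD j 0 = w.getD i 0 ∧ j < i))).length) + 1)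

/-- Partial sums of an evaluation `μ`. -/
def Msum (μ : ℕ → ℕ) (s : ℕ) : ℕ := ∑ t ∈ Finset.range s, μ t

/-- The color (block index) of the vertex `i` for the increasing coloring `ε_μ`. -/
noncomputable def colOf (μ : ℕ → ℕ) (p i : ℕ) : ℕ :=
  ((Finset.range p).filter (fun s => Msum μ (s + 1) < i)).card

/-- `D`, colored by the increasing coloring `ε_μ`, is a simple colored triangulation. -/
def SimpleFor (n p : ℕ) (μ : ℕ → ℕ) (D : Finset (ℕ × ℕ)) : Prop :=
  IsTriangulation n D ∧
  (∀ d ∈ D, 1 ≤ d.1 → d.2 ≤ n → colOf μ p d.1 ≠ colOf μ p d.2) ∧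
  (∀ i t, 1 ≤ i → i + 1 ≤ n → colOf μ p i = colOf μ p (i + 1) →
    FaceOnEdge n D i t → t < i)

/-- Switched flip: a diagonal flip (preserving vertex colors) whose two adjacent
faces (with middle vertices `b` and `c`) have different colors. -/
def SwFlipAdj (n p : ℕ) (μ : ℕ → ℕ) (D D' : Finset (ℕ × ℕ)) : Prop :=
  ∃ a b c d : ℕ, a < b ∧ b < c ∧ c < d ∧ colOf μ p b ≠ colOf μ p c ∧
    ((IsFace n D a b d ∧ IsFace n D b c d ∧ D' = insert (a, c) (D.erase (b, d))) ∨
     (IsFace n D a b c ∧ IsFace n D a c d ∧ D' = insert (b, d) (D.erase (a, c))))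

/-!
Reading a word left to right, `φ` records for each letter `v` (except the last) the diagonal
joining the two current neighbours of `v`, and then deletes `v`. A sylvester move
`x z ⋯ y ↦ z x ⋯ y` with `x < y < z` changes none of these neighbours, because `y` is still
present and separates `x` from `z`.

Conversely, suppose `φ(w₁) = φ(w₂)` and `w₂` starts with `v`. Then the diagonal joining the
neighbours of `v` in the full polygon occurs in `φ(w₁)`, so no letter `a` preceding `v` in `w₁`
is one of these neighbours. Hence the neighbour of `v` on the side of `a` lies strictly between
`a` and `v` and comes after `v` in `w₁`, which is exactly what a sylvester move exchanging `a`
and `v` requires. So `w₁` is congruent to a word starting with `v`; cancelling the common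
diagonal of `v` we conclude by induction on the length.
-/

section Neighbours

variable {Y : Finset ℕ} {a b v : ℕ}

lemma predIn_eq_max' (h : (Y.filter (· < v)).Nonempty) :
    predIn Y v = (Y.filter (· < v)).max' h := by
  rw [predIn, ← Finset.coe_max' h, WithBot.unbotD_coe]

lemma succIn_eq_min' (h : (Y.filter (v < ·)).Nonempty) :
    succIn Y v = (Y.filter (v < ·)).min' h := by
  rw [succIn, ← Finset.coe_min' h, WithTop.untopD_coe]

lemma predIn_mem (hb : b ∈ Y) (hbv : b < v) : predIn Y v ∈ Y := by
  have h : (Y.filter (· < v)).Nonempty := ⟨b, Finset.mem_filter.2 ⟨hb, hbv⟩⟩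
  rw [predIn_eq_max' h]
  exact (Finset.mem_filter.1 (Finset.max'_mem _ h)).1

lemma predIn_lt (hb : b ∈ Y) (hbv : b < v) : predIn Y v < v := by
  have h : (Y.filter (· < v)).Nonempty := ⟨b, Finset.mem_filter.2 ⟨hb, hbv⟩⟩
  rw [predIn_eq_max' h]
  exact (Finset.mem_filter.1 (Finset.max'_mem _ h)).2

lemma le_predIn (hb : b ∈ Y) (hbv : b < v) : b ≤ predIn Y v := by
  rw [predIn_eq_max' ⟨b, Finset.mem_filter.2 ⟨hb, hbv⟩⟩]
  exact Finset.le_max' _ b (Finset.mem_filter.2 ⟨hb, hbv⟩)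

lemma succIn_mem (hb : b ∈ Y) (hvb : v < b) : succIn Y v ∈ Y := by
  have h : (Y.filter (v < ·)).Nonempty := ⟨b, Finset.mem_filter.2 ⟨hb, hvb⟩⟩
  rw [succIn_eq_min' h]
  exact (Finset.mem_filter.1 (Finset.min'_mem _ h)).1

lemma lt_succIn (hb : b ∈ Y) (hvb : v < b) : v < succIn Y v := by
  have h : (Y.filter (v < ·)).Nonempty := ⟨b, Finset.mem_filter.2 ⟨hb, hvb⟩⟩
  rw [succIn_eq_min' h]
  exact (Finset.mem_filter.1 (Finset.min'_mem _ h)).2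

lemma succIn_le (hb : b ∈ Y) (hvb : v < b) : succIn Y v ≤ b := by
  rw [succIn_eq_min' ⟨b, Finset.mem_filter.2 ⟨hb, hvb⟩⟩]
  exact Finset.min'_le _ b (Finset.mem_filter.2 ⟨hb, hvb⟩)

lemma predIn_erase (hb : b ∈ Y.erase a) (hbv : b < v) (ha : predIn Y v ≠ a) :
    predIn (Y.erase a) v = predIn Y v := by
  have hb' := Finset.mem_of_mem_erase hb
  exact le_antisymm (le_predIn (Finset.mem_of_mem_erase (predIn_mem hb hbv)) (predIn_lt hb hbv))
    (le_predIn (Finset.mem_erase.2 ⟨ha, predIn_mem hb' hbv⟩) (predIn_lt hb' hbv))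

lemma succIn_erase (hb : b ∈ Y.erase a) (hvb : v < b) (ha : succIn Y v ≠ a) :
    succIn (Y.erase a) v = succIn Y v := by
  have hb' := Finset.mem_of_mem_erase hb
  exact le_antisymm (succIn_le (Finset.mem_erase.2 ⟨ha, succIn_mem hb' hvb⟩) (lt_succIn hb' hvb))
    (succIn_le (Finset.mem_of_mem_erase (succIn_mem hb hvb)) (lt_succIn hb hvb))

lemma eq_of_predIn_lt_of_lt_succIn {w : ℕ} (hw : w ∈ Y) (h₁ : predIn Y v < w)
    (h₂ : w < succIn Y v) : w = v := by
  rcases lt_trichotomy w v with h | h | h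
  · exact absurd (le_predIn hw h) h₁.not_ge
  · exact h
  · exact absurd (succIn_le hw h) h₂.not_ge

end Neighbours

lemma phiAux_cons_of_ne_nil {l : List ℕ} (hl : l ≠ []) (v : ℕ) (Y : Finset ℕ) :
    phiAux (v :: l) Y = insert (predIn Y v, succIn Y v) (phiAux l (Y.erase v)) := by
  obtain ⟨b, t, rfl⟩ := List.exists_cons_of_ne_nil hl
  rfl

lemma phiAux_swap {lo hi x y z : ℕ} {r : List ℕ} {Y : Finset ℕ} (hlo : lo ∈ Y) (hhi : hi ∈ Y)
    (hlox : lo < x) (hzhi : z < hi) (hy : y ∈ Y) (hxy : x < y) (hyz : y < z) (hr : r ≠ []) :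
    phiAux (x :: z :: r) Y = phiAux (z :: x :: r) Y := by
  have e₁ : predIn (Y.erase z) x = predIn Y x :=
    predIn_erase (Finset.mem_erase.2 ⟨by omega, hlo⟩) hlox
      ((predIn_lt hlo hlox).trans (hxy.trans hyz)).ne
  have e₂ : succIn (Y.erase z) x = succIn Y x :=
    succIn_erase (Finset.mem_erase.2 ⟨hyz.ne, hy⟩) hxy ((succIn_le hy hxy).trans_lt hyz).ne
  have e₃ : predIn (Y.erase x) z = predIn Y z :=
    predIn_erase (Finset.mem_erase.2 ⟨hxy.ne', hy⟩) hyz (hxy.trans_le (le_predIn hy hyz)).ne'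
  have e₄ : succIn (Y.erase x) z = succIn Y z :=
    succIn_erase (Finset.mem_erase.2 ⟨by omega, hhi⟩) hzhi
      ((hxy.trans hyz).trans (lt_succIn hhi hzhi)).ne'
  rw [phiAux_cons_of_ne_nil (List.cons_ne_nil _ _), phiAux_cons_of_ne_nil hr,
    phiAux_cons_of_ne_nil (List.cons_ne_nil _ _), phiAux_cons_of_ne_nil hr,
    e₁, e₂, e₃, e₄, Finset.erase_right_comm, Finset.insert_comm]

lemma SylvAdj.perm {w₁ w₂ : List ℕ} (h : SylvAdj w₁ w₂) : w₁.Perm w₂ := by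
  obtain ⟨u, u', u'', x, y, z, -, -, rfl, rfl⟩ := h
  exact (List.Perm.swap z x _).append_left u

lemma SylvCong.perm {w₁ w₂ : List ℕ} (h : SylvCong w₁ w₂) : w₁.Perm w₂ :=
  (List.Perm.eqv _).eqvGen_iff.1 (Relation.EqvGen.mono (fun _ _ => SylvAdj.perm) _ _ h)

lemma SylvAdj.cons {w₁ w₂ : List ℕ} (h : SylvAdj w₁ w₂) (c : ℕ) :
    SylvAdj (c :: w₁) (c :: w₂) := by
  obtain ⟨u, u', u'', x, y, z, hxy, hyz, rfl, rfl⟩ := h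
  exact ⟨c :: u, u', u'', x, y, z, hxy, hyz, rfl, rfl⟩

lemma SylvCong.cons {w₁ w₂ : List ℕ} (h : SylvCong w₁ w₂) (c : ℕ) :
    SylvCong (c :: w₁) (c :: w₂) := by
  induction h with
  | rel _ _ h => exact .rel _ _ (h.cons c)
  | refl => exact .refl _
  | symm _ _ _ ih => exact .symm _ _ ih
  | trans _ _ _ _ _ ih₁ ih₂ => exact .trans _ _ _ ih₁ ih₂

lemma sylvCong_swap_of_mem {a v y : ℕ} {w : List ℕ} (hy : y ∈ w)
    (h : a ≤ y ∧ y < v ∨ v ≤ y ∧ y < a) : SylvCong (a :: v :: w) (v :: a :: w) := by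
  obtain ⟨s, t, rfl⟩ := List.append_of_mem hy
  rcases h with ⟨h₁, h₂⟩ | ⟨h₁, h₂⟩
  · exact .rel _ _ ⟨[], s, t, a, y, v, h₁, h₂, rfl, rfl⟩
  · exact .symm _ _ (.rel _ _ ⟨[], s, t, v, y, a, h₁, h₂, rfl, rfl⟩)

/-- The vertices `lo` and `hi` guarantee that every letter has a neighbour in `Y` on each side,
so that `predIn` and `succIn` never take their junk value. -/
structure IsFramed (lo hi : ℕ) (Y : Finset ℕ) (l : List ℕ) : Prop where
  lo_mem : lo ∈ Y
  hi_mem : hi ∈ Y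
  nodup : l.Nodup
  mem : ∀ a ∈ l, a ∈ Y ∧ lo < a ∧ a < hi

def Fills (lo hi : ℕ) (Y : Finset ℕ) (l : List ℕ) : Prop :=
  ∀ a ∈ Y, lo < a → a < hi → a ∈ l

lemma Fills.erase {lo hi : ℕ} {Y : Finset ℕ} {l : List ℕ} (h : Fills lo hi Y l) (v : ℕ) :
    Fills lo hi (Y.erase v) (l.erase v) := fun a ha hloa hahi =>
  (List.mem_erase_of_ne (Finset.ne_of_mem_erase ha)).2 (h a (Finset.mem_of_mem_erase ha) hloa hahi)

namespace IsFramed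

variable {lo hi : ℕ}

lemma of_perm {Y : Finset ℕ} {l l' : List ℕ} (h : IsFramed lo hi Y l) (hp : l.Perm l') :
    IsFramed lo hi Y l' :=
  ⟨h.lo_mem, h.hi_mem, hp.nodup_iff.1 h.nodup, fun a ha => h.mem a (hp.mem_iff.2 ha)⟩

lemma erase {Y : Finset ℕ} {l : List ℕ} {v : ℕ} (h : IsFramed lo hi Y l) (hv : v ∈ l) :
    IsFramed lo hi (Y.erase v) (l.erase v) := by
  obtain ⟨-, hlov, hvhi⟩ := h.mem v hv
  refine ⟨Finset.mem_erase.2 ⟨hlov.ne, h.lo_mem⟩, Finset.mem_erase.2 ⟨hvhi.ne', h.hi_mem⟩,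
    h.nodup.erase v, fun a ha => ?_⟩
  obtain ⟨hav, ha⟩ := (h.nodup.mem_erase_iff).1 ha
  obtain ⟨haY, hloa, hahi⟩ := h.mem a ha
  exact ⟨Finset.mem_erase.2 ⟨hav, haY⟩, hloa, hahi⟩

lemma tail {Y : Finset ℕ} {l : List ℕ} {v : ℕ} (h : IsFramed lo hi Y (v :: l)) :
    IsFramed lo hi (Y.erase v) l := by
  simpa using h.erase List.mem_cons_self

lemma mem_phiAux : ∀ {l : List ℕ} {Y : Finset ℕ}, IsFramed lo hi Y l → ∀ {c d : ℕ},
    (c, d) ∈ phiAux l Y → c ∈ Y ∧ d ∈ Y ∧ ∃ u ∈ l, c < u ∧ u < d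
  | [], _, _, _, _, h => by simp [phiAux] at h
  | [_], _, _, _, _, h => by simp [phiAux] at h
  | v :: b :: t, Y, hl, c, d, h => by
    rw [phiAux_cons_of_ne_nil (List.cons_ne_nil b t), Finset.mem_insert] at h
    rcases h with h | h
    · obtain ⟨rfl, rfl⟩ := Prod.mk.inj h
      obtain ⟨-, hlov, hvhi⟩ := hl.mem v List.mem_cons_self
      exact ⟨predIn_mem hl.lo_mem hlov, succIn_mem hl.hi_mem hvhi, v, List.mem_cons_self,
        predIn_lt hl.lo_mem hlov, lt_succIn hl.hi_mem hvhi⟩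
    · obtain ⟨hc, hd, u, hu, hcu, hud⟩ := hl.tail.mem_phiAux h
      exact ⟨Finset.mem_of_mem_erase hc, Finset.mem_of_mem_erase hd, u, List.mem_cons_of_mem v hu,
        hcu, hud⟩

lemma predIn_succIn_not_mem_phiAux {w : List ℕ} {Y : Finset ℕ} {v : ℕ}
    (hw : IsFramed lo hi (Y.erase v) w) : (predIn Y v, succIn Y v) ∉ phiAux w (Y.erase v) := by
  intro h
  obtain ⟨-, -, u, hu, hpu, hus⟩ := hw.mem_phiAux h
  obtain ⟨huv, huY⟩ := Finset.mem_erase.1 (hw.mem u hu).1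
  exact huv (eq_of_predIn_lt_of_lt_succIn huY hpu hus)

lemma phiAux_eq_of_sylvAdj {w₁ w₂ : List ℕ} {Y : Finset ℕ} (hw : IsFramed lo hi Y w₁)
    (h : SylvAdj w₁ w₂) : phiAux w₁ Y = phiAux w₂ Y := by
  obtain ⟨u, u', u'', x, y, z, hxy, hyz, rfl, rfl⟩ := h
  induction u generalizing Y with
  | nil =>
    obtain ⟨-, hlox, -⟩ := hw.mem x (by simp)
    obtain ⟨-, -, hzhi⟩ := hw.mem z (by simp)
    obtain ⟨hy, -, -⟩ := hw.mem y (by simp)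
    have hxy' : x < y := hxy.lt_of_ne <| by
      rintro rfl
      exact (List.nodup_cons.1 hw.nodup).1 (by simp)
    exact phiAux_swap hw.lo_mem hw.hi_mem hlox hzhi hy hxy' hyz (by simp)
  | cons c u ih =>
    rw [List.cons_append, List.cons_append, phiAux_cons_of_ne_nil (by simp),
      phiAux_cons_of_ne_nil (by simp), ih hw.tail]

lemma phiAux_eq_of_sylvCong {w₁ w₂ : List ℕ} {Y : Finset ℕ} (hw : IsFramed lo hi Y w₁)
    (h : SylvCong w₁ w₂) : phiAux w₁ Y = phiAux w₂ Y := by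
  induction h with
  | rel _ _ h => exact hw.phiAux_eq_of_sylvAdj h
  | refl => rfl
  | symm _ _ h ih => exact (ih (hw.of_perm (SylvCong.perm h).symm)).symm
  | trans _ _ _ h _ ih₁ ih₂ => exact (ih₁ hw).trans (ih₂ (hw.of_perm (SylvCong.perm h)))

lemma sylvCong_cons_erase {l : List ℕ} {Y : Finset ℕ} {v : ℕ} (hl : IsFramed lo hi Y l)
    (hfill : Fills lo hi Y l) (hv : v ∈ l) (hmem : (predIn Y v, succIn Y v) ∈ phiAux l Y) :
    SylvCong l (v :: l.erase v) := by
  induction l generalizing Y with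
  | nil => simp at hv
  | cons a t ih =>
    obtain rfl | hav := eq_or_ne a v
    · rw [List.erase_cons_head]
      exact .refl _
    have hvt : v ∈ t := (List.mem_cons.1 hv).resolve_left hav.symm
    obtain ⟨-, hlov, hvhi⟩ := hl.mem v hv
    obtain ⟨haY, hloa, hahi⟩ := hl.mem a List.mem_cons_self
    rw [phiAux_cons_of_ne_nil (List.ne_nil_of_mem hvt), Finset.mem_insert] at hmem
    have hmem' : (predIn Y v, succIn Y v) ∈ phiAux t (Y.erase a) := by
      refine hmem.resolve_left fun he => hav ?_
      obtain ⟨hp, hs⟩ := Prod.mk.inj he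
      exact eq_of_predIn_lt_of_lt_succIn haY (hp ▸ predIn_lt hl.lo_mem hloa)
        (hs ▸ lt_succIn hl.hi_mem hahi)
    obtain ⟨hp, hs, -⟩ := hl.tail.mem_phiAux hmem'
    have hfill' : Fills lo hi (Y.erase a) t := by simpa using hfill.erase a
    have ht : SylvCong t (v :: t.erase v) := by
      refine ih hl.tail hfill' hvt ?_
      rwa [predIn_erase hl.tail.lo_mem hlov (Finset.ne_of_mem_erase hp),
        succIn_erase hl.tail.hi_mem hvhi (Finset.ne_of_mem_erase hs)]
    -- the neighbour of `v` on the side of `a` is a later letter separating `a` from `v`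
    have hswap : SylvCong (a :: v :: t.erase v) (v :: a :: t.erase v) := by
      rcases hav.lt_or_gt with hav | hva
      · refine sylvCong_swap_of_mem ((List.mem_erase_of_ne (predIn_lt hl.lo_mem hlov).ne).2
          (hfill' _ hp ?_ ?_)) (.inl ⟨le_predIn haY hav, predIn_lt hl.lo_mem hlov⟩)
        · exact hloa.trans_le (le_predIn haY hav)
        · exact (predIn_lt hl.lo_mem hlov).trans hvhi
      · refine sylvCong_swap_of_mem ((List.mem_erase_of_ne (lt_succIn hl.hi_mem hvhi).ne').2
          (hfill' _ hs ?_ ?_)) (.inr ⟨(lt_succIn hl.hi_mem hvhi).le,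
            (succIn_le haY hva).lt_of_ne (Finset.ne_of_mem_erase hs)⟩)
        · exact hlov.trans (lt_succIn hl.hi_mem hvhi)
        · exact (succIn_le haY hva).trans_lt hahi
    rw [List.erase_cons_tail (by simpa using hav)]
    exact .trans _ _ _ (ht.cons a) hswap

lemma sylvCong_of_phiAux_eq : ∀ {l₂ l₁ : List ℕ} {Y : Finset ℕ}, IsFramed lo hi Y l₁ →
    Fills lo hi Y l₁ → l₁.Perm l₂ → phiAux l₁ Y = phiAux l₂ Y → SylvCong l₁ l₂
  | [], _, _, _, _, hp, _ => by
    rw [hp.eq_nil]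
    exact .refl _
  | [_], _, _, _, _, hp, _ => by
    rw [List.perm_singleton.1 hp]
    exact .refl _
  | h :: b :: t, l₁, Y, hl, hfill, hp, heq => by
    have hh : h ∈ l₁ := hp.mem_iff.2 List.mem_cons_self
    have hp' : (l₁.erase h).Perm (b :: t) := by simpa using hp.erase h
    have hP : (predIn Y h, succIn Y h) ∈ phiAux l₁ Y := by
      rw [heq, phiAux_cons_of_ne_nil (List.cons_ne_nil _ _)]
      exact Finset.mem_insert_self _ _
    have hfront : SylvCong l₁ (h :: l₁.erase h) := hl.sylvCong_cons_erase hfill hh hP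
    have htail : phiAux (l₁.erase h) (Y.erase h) = phiAux (b :: t) (Y.erase h) := by
      have := (hl.phiAux_eq_of_sylvCong hfront).symm.trans heq
      rw [phiAux_cons_of_ne_nil (fun he => by simp [he] at hp'),
        phiAux_cons_of_ne_nil (List.cons_ne_nil _ _)] at this
      rw [← Finset.erase_insert (hl.erase hh).predIn_succIn_not_mem_phiAux, this,
        Finset.erase_insert ((hl.erase hh).of_perm hp').predIn_succIn_not_mem_phiAux]
    exact .trans _ _ _ hfront
      ((sylvCong_of_phiAux_eq (hl.erase hh) (hfill.erase h) hp' htail).cons h)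

end IsFramed

lemma isFramed_and_fills_of_perm_range {n : ℕ} {l : List ℕ}
    (h : l.Perm ((List.range n).map (· + 1))) :
    IsFramed 0 (n + 1) (Finset.range (n + 2)) l ∧ Fills 0 (n + 1) (Finset.range (n + 2)) l := by
  have hmem : ∀ a, a ∈ l ↔ 0 < a ∧ a < n + 1 := fun a => by
    rw [h.mem_iff, List.mem_map]
    simp only [List.mem_range]
    exact ⟨fun ⟨i, hi, hia⟩ => by omega, fun ha => ⟨a - 1, by omega, by omega⟩⟩
  refine ⟨⟨by simp, by simp, h.nodup_iff.2 (List.nodup_range.map (add_left_injective 1)),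
    fun a ha => ?_⟩, fun a _ h₁ h₂ => (hmem a).2 ⟨h₁, h₂⟩⟩
  obtain ⟨h₁, h₂⟩ := (hmem a).1 ha
  exact ⟨Finset.mem_range.2 (by omega), h₁, h₂⟩

/-- Two permutations `σ_1, σ_2 ∈ S_n` satisfy `φ(σ_1) = φ(σ_2)` if and only if
they are sylvester congruent. -/
theorem stmt10 (n : ℕ) (l1 l2 : List ℕ)
    (h1 : l1.Perm ((List.range n).map (· + 1)))
    (h2 : l2.Perm ((List.range n).map (· + 1))) :
    phiT n l1 = phiT n l2 ↔ SylvCong l1 l2 := by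
  obtain ⟨hframed, hfills⟩ := isFramed_and_fills_of_perm_range h1
  exact ⟨hframed.sylvCong_of_phiAux_eq hfills (h1.trans h2.symm), hframed.phiAux_eq_of_sylvCong⟩
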